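/- arXiv:1610.09266 — 2 statements merged into one kernel-verified Lean document; each statement's English description precedes it below -/
import Mathlib

section
/- In the polynomial ring ℂ[θ_1,θ_2,θ_3,ω], let χ_1,…,χ_8 be the eight linear forms ±θ_1±θ_2±θ_3 (all sign combinations). Then σ_3(χ•) ω⁵ + σ_5(χ•) ω³ + σ_7(χ•) ω + σ_8(χ•) = σ_1(θ)² ( σ_1(θ)³ − 4 σ_2(θ) σ_1(θ) + 8 σ_3(θ) )²; equivalently (since the odd elementary symmetric polynomials of χ_1,…,χ_8 vanish), the product of all eight characters satisfies σ_8(χ•) = χ_1χ_2⋯χ_8 = σ_1²(σ_1³ − 4σ_1σ_2 + 8σ_3)². (This is the generator Q̃^S_{−,2} of the kernel ideal for the three-qubit case r = 3.) -/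
open MvPolynomial

/-- `θ_1` in `ℂ[θ_1,θ_2,θ_3,ω]`. -/
noncomputable def θ₁ : MvPolynomial (Fin 4) ℂ := X 0
/-- `θ_2` in `ℂ[θ_1,θ_2,θ_3,ω]`. -/
noncomputable def θ₂ : MvPolynomial (Fin 4) ℂ := X 1
/-- `θ_3` in `ℂ[θ_1,θ_2,θ_3,ω]`. -/
noncomputable def θ₃ : MvPolynomial (Fin 4) ℂ := X 2
/-- `ω` in `ℂ[θ_1,θ_2,θ_3,ω]`. -/
noncomputable def w : MvPolynomial (Fin 4) ℂ := X 3

/-- The multiset of the eight linear forms `±θ_1 ± θ_2 ± θ_3` (all sign combinations),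
the additive characters of the `T³`-action on `ℙ_7`. -/
noncomputable def χs : Multiset (MvPolynomial (Fin 4) ℂ) :=
  {θ₁ + θ₂ + θ₃, θ₁ + θ₂ - θ₃, θ₁ - θ₂ + θ₃, -θ₁ + θ₂ + θ₃,
   θ₁ - θ₂ - θ₃, -θ₁ + θ₂ - θ₃, -θ₁ - θ₂ + θ₃, -θ₁ - θ₂ - θ₃}

/-- `σ_1(θ) = θ_1 + θ_2 + θ_3`. -/
noncomputable def s₁ : MvPolynomial (Fin 4) ℂ := θ₁ + θ₂ + θ₃
/-- `σ_2(θ) = θ_1θ_2 + θ_1θ_3 + θ_2θ_3`. -/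
noncomputable def s₂ : MvPolynomial (Fin 4) ℂ := θ₁ * θ₂ + θ₁ * θ₃ + θ₂ * θ₃
/-- `σ_3(θ) = θ_1θ_2θ_3`. -/
noncomputable def s₃ : MvPolynomial (Fin 4) ℂ := θ₁ * θ₂ * θ₃

/-!
The eight characters come in pairs `±χ`, so their multiset is invariant under negation. Since
`esymm k` of the negated multiset is `(-1)^k esymm k`, the odd elementary symmetric polynomials
vanish, and the product of all eight is the square of the product of one character from each
pair, namely `σ₁ (σ₁ - 2θ₁)(σ₁ - 2θ₂)(σ₁ - 2θ₃) = -σ₁ (σ₁³ - 4σ₁σ₂ + 8σ₃)`.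
-/

namespace Multiset

theorem esymm_card {R : Type*} [CommSemiring R] (s : Multiset R) :
    s.esymm (card s) = s.prod := by
  simp [esymm, powersetCard_self]

theorem map_neg_add_map_neg {α : Type*} [InvolutiveNeg α] (t : Multiset α) :
    (t + t.map Neg.neg).map Neg.neg = t + t.map Neg.neg := by
  rw [map_add, map_map, Function.comp_def]
  simp only [neg_neg, map_id', add_comm]

variable {R : Type*} [CommRing R]

theorem esymm_eq_zero_of_map_neg_eq [NoZeroDivisors R] [CharZero R] {s : Multiset R}
    (hs : s.map Neg.neg = s) {k : ℕ} (hk : Odd k) : s.esymm k = 0 := by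
  have h := esymm_neg s k
  rwa [hs, hk.neg_one_pow, neg_one_mul, CharZero.eq_neg_self_iff] at h

theorem prod_add_map_neg (t : Multiset R) :
    (t + t.map Neg.neg).prod = (-1) ^ card t * t.prod ^ 2 := by
  rw [prod_add, prod_map_neg]
  ring

end Multiset

noncomputable def χsHalf : Multiset (MvPolynomial (Fin 4) ℂ) :=
  {θ₁ + θ₂ + θ₃, θ₁ + θ₂ - θ₃, θ₁ - θ₂ + θ₃, -θ₁ + θ₂ + θ₃}

theorem χs_eq_add_map_neg : χs = χsHalf + χsHalf.map Neg.neg := by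
  have h₁ : -(θ₁ + θ₂ + θ₃) = -θ₁ - θ₂ - θ₃ := by ring
  have h₂ : -(θ₁ + θ₂ - θ₃) = -θ₁ - θ₂ + θ₃ := by ring
  have h₃ : -(θ₁ - θ₂ + θ₃) = -θ₁ + θ₂ - θ₃ := by ring
  have h₄ : -(-θ₁ + θ₂ + θ₃) = θ₁ - θ₂ - θ₃ := by ring
  simp only [χs, χsHalf, Multiset.insert_eq_cons, Multiset.map_cons, Multiset.map_singleton,
    Multiset.cons_add, Multiset.singleton_add, h₁, h₂, h₃, h₄]
  simp only [← Multiset.cons_zero, Multiset.cons_swap]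

theorem χs_map_neg : χs.map Neg.neg = χs := by
  rw [χs_eq_add_map_neg]
  exact Multiset.map_neg_add_map_neg χsHalf

theorem χsHalf_prod : χsHalf.prod = -(s₁ * (s₁ ^ 3 - 4 * s₁ * s₂ + 8 * s₃)) := by
  simp only [χsHalf, s₁, s₂, s₃, Multiset.insert_eq_cons, Multiset.prod_cons,
    Multiset.prod_singleton]
  ring

theorem χs_prod : χs.prod = s₁ ^ 2 * (s₁ ^ 3 - 4 * s₁ * s₂ + 8 * s₃) ^ 2 := by
  rw [χs_eq_add_map_neg, Multiset.prod_add_map_neg, χsHalf_prod]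
  simp only [χsHalf, Multiset.insert_eq_cons, Multiset.card_cons, Multiset.card_singleton]
  ring

/-- Three-qubit kernel generator `Q̃^S_{-,2}`:
`σ_3(χ•) ω⁵ + σ_5(χ•) ω³ + σ_7(χ•) ω + σ_8(χ•) = σ_1² (σ_1³ - 4 σ_2 σ_1 + 8 σ_3)²`;
equivalently, the product of all eight characters is
`σ_8(χ•) = χ_1 ⋯ χ_8 = σ_1² (σ_1³ - 4 σ_1 σ_2 + 8 σ_3)²`. -/
theorem three_qubit_kernel_generator_minus_two :
    (χs.esymm 3 * w ^ 5 + χs.esymm 5 * w ^ 3 + χs.esymm 7 * w + χs.esymm 8 =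
      s₁ ^ 2 * (s₁ ^ 3 - 4 * s₂ * s₁ + 8 * s₃) ^ 2) ∧
    χs.esymm 8 = s₁ ^ 2 * (s₁ ^ 3 - 4 * s₁ * s₂ + 8 * s₃) ^ 2 ∧
    χs.esymm 8 = χs.prod := by
  have h₈ : χs.esymm 8 = χs.prod := Multiset.esymm_card χs
  have hodd (k : ℕ) (hk : Odd k) : χs.esymm k = 0 :=
    Multiset.esymm_eq_zero_of_map_neg_eq χs_map_neg hk
  refine ⟨?_, h₈.trans χs_prod, h₈⟩
  rw [hodd 3 ⟨1, rfl⟩, hodd 5 ⟨2, rfl⟩, hodd 7 ⟨3, rfl⟩, h₈, χs_prod]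
  ring
end

section
/- In the polynomial ring ℂ[θ_1,θ_2,θ_3,ω], let χ_1,…,χ_8 be the eight linear forms ±θ_1±θ_2±θ_3 (all sign combinations). Writing σ_i for the elementary symmetric polynomials σ_i(θ_1,θ_2,θ_3), one has the identity σ_4(χ•) ω⁴ + σ_6(χ•) ω² + σ_7(χ•) ω + σ_8(χ•) = −4σ_1⁶(2σ_2+ω²) − 32σ_3σ_1³(2σ_2+ω²) + 16σ_3σ_1ω²(4σ_2+ω²) + 16ω²(σ_2²ω² − 4σ_3²) + 2σ_1⁴(12σ_2ω² + 8σ_2² + 3ω⁴) − 8σ_1²(3σ_2ω⁴ + 4σ_2²ω² − 8σ_3²) + σ_1⁸ + 16σ_3σ_1⁵. (This is the generator Q̃^S_{−,1} of the kernel ideal for the three-qubit case r = 3.) -/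
open MvPolynomial

namespace Multiset

variable {R : Type*} [CommSemiring R]

theorem esymm_zero_right (s : Multiset R) : s.esymm 0 = 1 := by
  simp [esymm]

theorem esymm_zero_left_succ (n : ℕ) : (0 : Multiset R).esymm (n + 1) = 0 := by
  simp [esymm, powersetCard_zero_right]

theorem esymm_cons_succ (a : R) (s : Multiset R) (n : ℕ) :
    (a ::ₘ s).esymm (n + 1) = a * s.esymm n + s.esymm (n + 1) := by
  simp only [esymm, powersetCard_cons, map_add, map_map, Function.comp_def, prod_cons, sum_add,
    sum_map_mul_left]
  exact add_comm _ _

end Multiset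

/-- Three-qubit kernel generator `Q̃^S_{-,1}`:
`σ_4(χ•) ω⁴ + σ_6(χ•) ω² + σ_7(χ•) ω + σ_8(χ•)
  = -4σ_1⁶(2σ_2+ω²) - 32σ_3σ_1³(2σ_2+ω²) + 16σ_3σ_1ω²(4σ_2+ω²) + 16ω²(σ_2²ω² - 4σ_3²)
    + 2σ_1⁴(12σ_2ω² + 8σ_2² + 3ω⁴) - 8σ_1²(3σ_2ω⁴ + 4σ_2²ω² - 8σ_3²) + σ_1⁸ + 16σ_3σ_1⁵`. -/
theorem three_qubit_kernel_generator_minus_one :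
    χs.esymm 4 * w ^ 4 + χs.esymm 6 * w ^ 2 + χs.esymm 7 * w + χs.esymm 8 =
      -4 * s₁ ^ 6 * (2 * s₂ + w ^ 2) - 32 * s₃ * s₁ ^ 3 * (2 * s₂ + w ^ 2) +
        16 * s₃ * s₁ * w ^ 2 * (4 * s₂ + w ^ 2) +
        16 * w ^ 2 * (s₂ ^ 2 * w ^ 2 - 4 * s₃ ^ 2) +
        2 * s₁ ^ 4 * (12 * s₂ * w ^ 2 + 8 * s₂ ^ 2 + 3 * w ^ 4) -
        8 * s₁ ^ 2 * (3 * s₂ * w ^ 4 + 4 * s₂ ^ 2 * w ^ 2 - 8 * s₃ ^ 2) +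
        s₁ ^ 8 + 16 * s₃ * s₁ ^ 5 := by
  simp only [χs, s₁, s₂, s₃, Multiset.insert_eq_cons, ← Multiset.cons_zero,
    Multiset.esymm_cons_succ, Multiset.esymm_zero_left_succ, Multiset.esymm_zero_right]
  ring
end
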